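/- arXiv:1010.1961 — 3 statements merged into one kernel-verified Lean document; each statement's English description precedes it below -/
import Mathlib

section
/- (Doob's maximal identity.) Let τ be a stopping time of (𝓕_t) with P[τ < ∞] = 1, and let a > 0 be a real number. Then, almost surely, P[sup_{s ∈ [τ, ∞)} M_s ≥ a | 𝓕_τ] = min(1, M_τ / a). -/
/-!
On `{M τ < a}` let `σₜ` be the first time in `[τ, t]` at which `M` reaches `a` (or `t` if there
is none). Optional sampling at the bounded stopping times `τ ∧ t` and `σₜ` shows that for
`B ∈ 𝓕_τ` inside `{M τ < a}`, `E[M τ; B, τ ≤ t]` equals `a · P(B, a reached by t)` plus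
`E[M t; B, τ ≤ t, a not reached by t]`. Continuity makes `M σₜ = a` on the first event; on the
second `0 ≤ M t < a`, so that term vanishes as `t → ∞` because `M t → 0`. Hence
`E[M τ; B] = a · P(B, a reached after τ)`, which together with the trivial case `M τ ≥ a` is the
defining property of the conditional expectation. Finally, a continuous path tending to `0`
attains its supremum over `[τ, ∞)` whenever that supremum is positive, so
`{sup_{s ≥ τ} M s ≥ a}` is the event that `a` is reached after `τ`.
-/

open MeasureTheory Filter Set Topology
open scoped NNReal ENNReal

noncomputable def dyadicCeil (k : ℕ) (x : ℝ≥0) : ℝ≥0 := ⌈x * 2 ^ k⌉₊ / 2 ^ k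

lemma le_dyadicCeil (k : ℕ) (x : ℝ≥0) : x ≤ dyadicCeil k x := by
  rw [dyadicCeil, le_div_iff₀ (by positivity)]
  exact Nat.le_ceil _

lemma dyadicCeil_le_add (k : ℕ) (x : ℝ≥0) : dyadicCeil k x ≤ x + (2 ^ k)⁻¹ := by
  rw [dyadicCeil, div_le_iff₀ (by positivity), add_mul, inv_mul_cancel₀ (by positivity)]
  exact (Nat.ceil_lt_add_one zero_le).le

lemma dyadicCeil_le_iff {k : ℕ} {x t : ℝ≥0} : dyadicCeil k x ≤ t ↔ x ≤ ⌊t * 2 ^ k⌋₊ / 2 ^ k := by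
  rw [dyadicCeil, div_le_iff₀ (by positivity), le_div_iff₀ (by positivity), ← Nat.ceil_le,
    Nat.le_floor_iff zero_le]

lemma tendsto_dyadicCeil (x : ℝ≥0) : Tendsto (dyadicCeil · x) atTop (𝓝 x) := by
  have h : Tendsto (fun k : ℕ => x + (2 ^ k)⁻¹) atTop (𝓝 (x + 0)) := by
    refine tendsto_const_nhds.add ?_
    simp_rw [← inv_pow]
    exact NNReal.tendsto_pow_atTop_nhds_zero_of_lt_one (by norm_num)
  rw [add_zero] at h
  exact tendsto_of_tendsto_of_tendsto_of_le_of_le tendsto_const_nhds h (le_dyadicCeil · x)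
    (dyadicCeil_le_add · x)

lemma countable_range_dyadicCeil (k : ℕ) : (range (dyadicCeil k)).Countable :=
  (countable_range fun n : ℕ => (n : ℝ≥0) / 2 ^ k).mono <|
    range_subset_iff.2 fun x => mem_range.2 ⟨⌈x * 2 ^ k⌉₊, rfl⟩

/-- A positive value forces `f` to attain its maximum, so `⨆` is never the junk value `0` of a
range unbounded above. -/
lemma le_iSup_iff_exists_le_of_tendsto_zero {β : Type*} [TopologicalSpace β] {f : β → ℝ}
    (hf : Continuous f) (hlim : Tendsto f (cocompact β) (𝓝 0)) {a : ℝ} (ha : 0 < a) :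
    a ≤ ⨆ x, f x ↔ ∃ x, a ≤ f x := by
  by_cases hpos : ∃ x₀, 0 < f x₀
  · obtain ⟨x₀, hx₀⟩ := hpos
    have : Nonempty β := ⟨x₀⟩
    obtain ⟨x, hx⟩ := hf.exists_forall_ge' x₀ (hlim.eventually (ge_mem_nhds hx₀))
    exact ⟨fun h => ⟨x, h.trans (ciSup_le hx)⟩,
      fun ⟨y, hy⟩ => hy.trans (le_ciSup ⟨f x, forall_mem_range.2 hx⟩ y)⟩
  · push Not at hpos
    exact ⟨fun h => absurd (h.trans (Real.iSup_nonpos hpos)) ha.not_ge,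
      fun ⟨x, hx⟩ => absurd (hx.trans (hpos x)) ha.not_ge⟩

namespace MeasureTheory

variable {Ω : Type*} {m : MeasurableSpace Ω}

lemma isStoppingTime_coe_iff {ι : Type*} [Preorder ι] {𝒢 : Filtration ι m} {ρ : Ω → ι} :
    IsStoppingTime 𝒢 (fun ω => (ρ ω : WithTop ι)) ↔ ∀ t, MeasurableSet[𝒢 t] {ω | ρ ω ≤ t} := by
  simp only [IsStoppingTime, WithTop.coe_le_coe]

variable {ℱ : Filtration ℝ≥0 m}

lemma IsStoppingTime.dyadicCeil {ρ : Ω → ℝ≥0}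
    (hρ : IsStoppingTime ℱ (fun ω => (ρ ω : WithTop ℝ≥0))) (k : ℕ) :
    IsStoppingTime ℱ (fun ω => (dyadicCeil k (ρ ω) : WithTop ℝ≥0)) := by
  rw [isStoppingTime_coe_iff] at hρ ⊢
  intro t
  simp_rw [dyadicCeil_le_iff]
  refine ℱ.mono ?_ _ (hρ _)
  rw [div_le_iff₀ (by positivity)]
  exact Nat.floor_le zero_le

lemma measurable_apply_of_isStoppingTime {M : ℝ≥0 → Ω → ℝ} (hMad : StronglyAdapted ℱ M)
    (hMcont : ∀ ω, Continuous fun t => M t ω) {τ : Ω → ℝ≥0}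
    (hτ : IsStoppingTime ℱ fun ω => (τ ω : WithTop ℝ≥0)) :
    Measurable[hτ.measurableSpace] fun ω => M (τ ω) ω :=
  measurable_stoppedValue (hMad.isStronglyProgressive_of_continuous hMcont) hτ

lemma UniformIntegrable.tendsto_setIntegral {E : Type*} [NormedAddCommGroup E] [NormedSpace ℝ E]
    {μ : Measure Ω} [IsFiniteMeasure μ] {f : ℕ → Ω → E} {g : Ω → E}
    (hUI : UniformIntegrable f 1 μ) (hlim : ∀ᵐ ω ∂μ, Tendsto (f · ω) atTop (𝓝 (g ω)))
    (s : Set Ω) : Tendsto (fun n => ∫ ω in s, f n ω ∂μ) atTop (𝓝 (∫ ω in s, g ω ∂μ)) := by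
  have hg := hUI.memLp_of_ae_tendsto hlim
  refine tendsto_setIntegral_of_L1 g hg.1 (Eventually.of_forall fun n =>
    memLp_one_iff_integrable.1 ⟨hUI.1 n, (hUI.2.2.choose_spec n).trans_lt ENNReal.coe_lt_top⟩) ?_ s
  simpa only [eLpNorm_one_eq_lintegral_enorm, Pi.sub_apply] using
    tendsto_Lp_finite_of_tendsto_ae le_rfl ENNReal.one_ne_top hUI.1 hg hUI.2.1 hlim

section OptionalSampling

variable {P : Measure Ω} [IsFiniteMeasure P] {M : ℝ≥0 → Ω → ℝ}

/-- Reduced to the discrete case through the dyadic approximations `τₖ ↓ τ`: the family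
`M τₖ = E[M N | 𝓕_τₖ]` is uniformly integrable, so `M τₖ → M τ` also in `L¹`. -/
theorem Martingale.stoppedValue_ae_eq_condExp_of_le_const_of_continuous
    (hM : Martingale M ℱ P) (hMcont : ∀ ω, Continuous fun t => M t ω) {τ : Ω → WithTop ℝ≥0}
    (hτ : IsStoppingTime ℱ τ) {N : ℝ≥0} (hτN : ∀ ω, τ ω ≤ N) :
    stoppedValue M τ =ᵐ[P] P[M N | hτ.measurableSpace] := by
  obtain ⟨ρ, rfl⟩ : ∃ ρ : Ω → ℝ≥0, (fun ω => (ρ ω : WithTop ℝ≥0)) = τ :=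
    ⟨fun ω => (τ ω).untop (ne_top_of_le_ne_top WithTop.coe_ne_top (hτN ω)),
      funext fun ω => WithTop.coe_untop _ _⟩
  simp only [WithTop.coe_le_coe] at hτN
  show (fun ω => M (ρ ω) ω) =ᵐ[P] _
  set ρ' : ℕ → Ω → ℝ≥0 := fun k ω => min (dyadicCeil k (ρ ω)) N
  have hρ' : ∀ k, IsStoppingTime ℱ fun ω => (ρ' k ω : WithTop ℝ≥0) := fun k => by
    simpa only [ρ', WithTop.coe_min] using (hτ.dyadicCeil k).min_const N
  have hρ_le : ∀ k ω, ρ ω ≤ ρ' k ω := fun k ω => le_min (le_dyadicCeil k _) (hτN ω)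
  have hcond : ∀ k, (fun ω => M (ρ' k ω) ω) =ᵐ[P] P[M N | (hρ' k).measurableSpace] := fun k =>
    hM.stoppedValue_ae_eq_condExp_of_le_const_of_countable_range (hρ' k)
      (fun ω => WithTop.coe_le_coe.2 (min_le_right _ _))
      (((countable_range_dyadicCeil k).image fun x => ((min x N : ℝ≥0) : WithTop ℝ≥0)).mono <|
        range_subset_iff.2 fun ω => mem_image_of_mem (fun x => ((min x N : ℝ≥0) : WithTop ℝ≥0))
          (mem_range_self (f := dyadicCeil k) (ρ ω)))
  have hlim : ∀ ω, Tendsto (fun k => M (ρ' k ω) ω) atTop (𝓝 (M (ρ ω) ω)) := fun ω => by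
    have := (tendsto_dyadicCeil (ρ ω)).min (tendsto_const_nhds (x := N))
    rw [min_eq_left (hτN ω)] at this
    exact (hMcont ω).continuousAt.tendsto.comp this
  have hUI : UniformIntegrable (fun k ω => M (ρ' k ω) ω) 1 P :=
    ((hM.integrable N).uniformIntegrable_condExp fun k => (hρ' k).measurableSpace_le).ae_eq
      fun k => (hcond k).symm
  refine ae_eq_condExp_of_forall_setIntegral_eq hτ.measurableSpace_le (hM.integrable N)
    (fun _ _ _ => (hUI.integrable_of_ae_tendsto (ae_of_all _ hlim)).integrableOn)
    (fun B hB _ => ?_)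
    (measurable_apply_of_isStoppingTime hM.stronglyAdapted hMcont hτ).aestronglyMeasurable
  refine tendsto_nhds_unique (hUI.tendsto_setIntegral (ae_of_all _ hlim) B)
    (tendsto_const_nhds.congr fun k => ?_)
  have hBk : MeasurableSet[(hρ' k).measurableSpace] B :=
    hτ.measurableSpace_mono (hρ' k) (fun ω => WithTop.coe_le_coe.2 (hρ_le k ω)) _ hB
  rw [setIntegral_congr_ae ((hρ' k).measurableSpace_le _ hBk) ((hcond k).mono fun _ h _ => h)]
  exact (setIntegral_condExp (hρ' k).measurableSpace_le (hM.integrable N) hBk).symm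

theorem Martingale.integrable_stoppedValue_of_le_const_of_continuous (hM : Martingale M ℱ P)
    (hMcont : ∀ ω, Continuous fun t => M t ω) {τ : Ω → WithTop ℝ≥0} (hτ : IsStoppingTime ℱ τ)
    {N : ℝ≥0} (hτN : ∀ ω, τ ω ≤ N) : Integrable (stoppedValue M τ) P :=
  integrable_condExp.congr
    (hM.stoppedValue_ae_eq_condExp_of_le_const_of_continuous hMcont hτ hτN).symm

theorem Martingale.setIntegral_stoppedValue_of_le_const_of_continuous (hM : Martingale M ℱ P)
    (hMcont : ∀ ω, Continuous fun t => M t ω) {τ : Ω → WithTop ℝ≥0} (hτ : IsStoppingTime ℱ τ)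
    {N : ℝ≥0} (hτN : ∀ ω, τ ω ≤ N) {B : Set Ω} (hB : MeasurableSet[hτ.measurableSpace] B) :
    ∫ ω in B, stoppedValue M τ ω ∂P = ∫ ω in B, M N ω ∂P := by
  rw [setIntegral_congr_ae (hτ.measurableSpace_le _ hB)
    ((hM.stoppedValue_ae_eq_condExp_of_le_const_of_continuous hMcont hτ hτN).mono fun _ h _ => h)]
  exact setIntegral_condExp _ (hM.integrable N) hB

end OptionalSampling

section Reaching

variable (X : ℝ≥0 → Ω → ℝ) (τ : Ω → ℝ≥0) (a : ℝ)

def reachedBy (t : ℝ≥0) : Set Ω := {ω | ∃ s ∈ Icc (τ ω) t, a ≤ X s ω}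

open Classical in
noncomputable def firstReachTime (t : ℝ≥0) (ω : Ω) : ℝ≥0 :=
  if ω ∈ reachedBy X τ a t then sInf {s ∈ Icc (τ ω) t | a ≤ X s ω} else t

variable {X τ a}

lemma reachedBy_mono : Monotone (reachedBy X τ a) :=
  fun _ _ hst _ ⟨s, hs, hXs⟩ => ⟨s, ⟨hs.1, hs.2.trans hst⟩, hXs⟩

lemma iUnion_reachedBy_natCast :
    ⋃ n : ℕ, reachedBy X τ a n = {ω | ∃ s, τ ω ≤ s ∧ a ≤ X s ω} := by
  ext ω
  simp only [mem_iUnion, reachedBy, mem_ofPred_eq, mem_Icc]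
  exact ⟨fun ⟨_, s, hs, hXs⟩ => ⟨s, hs.1, hXs⟩,
    fun ⟨s, hs, hXs⟩ => ⟨⌈s⌉₊, s, ⟨hs, Nat.le_ceil s⟩, hXs⟩⟩

lemma lt_of_notMem_reachedBy {t : ℝ≥0} {ω : Ω} (h : ω ∉ reachedBy X τ a t) (hτt : τ ω ≤ t) :
    X t ω < a :=
  not_le.1 fun hX => h ⟨t, ⟨hτt, le_rfl⟩, hX⟩

lemma firstReachTime_of_notMem {t : ℝ≥0} {ω : Ω} (h : ω ∉ reachedBy X τ a t) :
    firstReachTime X τ a t ω = t := if_neg h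

lemma firstReachTime_le_of_mem {t s : ℝ≥0} {ω : Ω} (hs : s ∈ Icc (τ ω) t) (hXs : a ≤ X s ω) :
    firstReachTime X τ a t ω ≤ s := by
  rw [firstReachTime, if_pos ⟨s, hs, hXs⟩]
  exact csInf_le (OrderBot.bddBelow _) ⟨hs, hXs⟩

lemma firstReachTime_mem (hX : ∀ ω, Continuous fun t => X t ω) {t : ℝ≥0} {ω : Ω}
    (h : ω ∈ reachedBy X τ a t) :
    firstReachTime X τ a t ω ∈ Icc (τ ω) t ∧ a ≤ X (firstReachTime X τ a t ω) ω := by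
  have hclosed : IsClosed {s ∈ Icc (τ ω) t | a ≤ X s ω} :=
    isClosed_Icc.inter (isClosed_le continuous_const (hX ω))
  rw [firstReachTime, if_pos h]
  exact hclosed.csInf_mem h (OrderBot.bddBelow _)

lemma firstReachTime_le (hX : ∀ ω, Continuous fun t => X t ω) (t : ℝ≥0) (ω : Ω) :
    firstReachTime X τ a t ω ≤ t := by
  by_cases h : ω ∈ reachedBy X τ a t
  · exact (firstReachTime_mem hX h).1.2
  · exact (firstReachTime_of_notMem h).le

lemma min_le_firstReachTime (hX : ∀ ω, Continuous fun t => X t ω) (t : ℝ≥0) (ω : Ω) :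
    min (τ ω) t ≤ firstReachTime X τ a t ω := by
  by_cases h : ω ∈ reachedBy X τ a t
  · exact (min_le_left _ _).trans (firstReachTime_mem hX h).1.1
  · exact (min_le_right _ _).trans (firstReachTime_of_notMem h).ge

lemma firstReachTime_le_iff (hX : ∀ ω, Continuous fun t => X t ω) {t u : ℝ≥0} (hut : u < t)
    (ω : Ω) : firstReachTime X τ a t ω ≤ u ↔ ω ∈ reachedBy X τ a u := by
  refine ⟨fun hu => ?_, fun ⟨s, hs, hXs⟩ => ?_⟩
  · by_cases h : ω ∈ reachedBy X τ a t
    · obtain ⟨hmem, haX⟩ := firstReachTime_mem hX h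
      exact ⟨_, ⟨hmem.1, hu⟩, haX⟩
    · rw [firstReachTime_of_notMem h] at hu
      exact absurd hut hu.not_gt
  · exact (firstReachTime_le_of_mem ⟨hs.1, hs.2.trans hut.le⟩ hXs).trans hs.2

lemma apply_firstReachTime (hX : ∀ ω, Continuous fun t => X t ω) {t : ℝ≥0} {ω : Ω}
    (h : ω ∈ reachedBy X τ a t) (hτa : X (τ ω) ω < a) :
    X (firstReachTime X τ a t ω) ω = a := by
  set σ := firstReachTime X τ a t ω
  obtain ⟨⟨hτσ, hσt⟩, haσ⟩ := firstReachTime_mem hX h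
  have hτσ : τ ω < σ := hτσ.lt_of_ne fun h => (h ▸ hτa).not_ge haσ
  have hbefore : ∀ u ∈ Ioo (τ ω) σ, X u ω ≤ a := fun u hu =>
    le_of_not_ge fun hXu => hu.2.not_ge (firstReachTime_le_of_mem ⟨hu.1.le, hu.2.le.trans hσt⟩ hXu)
  refine le_antisymm ?_ haσ
  have : (𝓝[<] σ).NeBot := nhdsLT_neBot_of_exists_lt ⟨τ ω, hτσ⟩
  refine le_of_tendsto (((hX ω).tendsto σ).mono_left (nhdsWithin_le_nhds (s := Iio σ))) ?_
  filter_upwards [Ioo_mem_nhdsLT hτσ] with u hu using hbefore u hu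

lemma reachedBy_eq_iInter_iUnion (hX : ∀ ω, Continuous fun t => X t ω) {D : Set ℝ≥0}
    (hD : Dense D) (t : ℝ≥0) :
    reachedBy X τ a t =
      ⋂ k : ℕ, ⋃ v ∈ Iic t ∩ insert t D, {ω | τ ω ≤ v ∧ a - 1 / (k + 1) < X v ω} := by
  ext ω
  simp only [mem_iInter, mem_iUnion, mem_ofPred_eq, exists_prop]
  constructor
  · rintro ⟨s, ⟨hτs, hst⟩, hXs⟩ k
    have hXs' : a - 1 / (k + 1) < X s ω := by linarith [Nat.one_div_pos_of_nat (α := ℝ) (n := k)]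
    obtain rfl | hst := hst.eq_or_lt
    · exact ⟨s, ⟨mem_Iic.2 le_rfl, mem_insert _ _⟩, hτs, hXs'⟩
    obtain ⟨u, hsu, hIco⟩ := exists_Ico_subset_of_mem_nhds
      ((isOpen_lt continuous_const (hX ω)).mem_nhds hXs') ⟨t, hst⟩
    obtain ⟨v, hvD, hsv, hvu⟩ := hD.exists_between (lt_min hst hsu)
    exact ⟨v, ⟨hvu.le.trans (min_le_left _ _), mem_insert_of_mem _ hvD⟩, hτs.trans hsv.le,
      hIco ⟨hsv.le, hvu.trans_le (min_le_right _ _)⟩⟩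
  · intro h
    obtain ⟨v₀, hv₀, hτv₀, -⟩ := h 0
    obtain ⟨s, hs, hsmax⟩ := isCompact_Icc.exists_isMaxOn
      (nonempty_Icc.2 (hτv₀.trans hv₀.1)) (hX ω).continuousOn
    refine ⟨s, hs, le_of_not_gt fun hlt => ?_⟩
    obtain ⟨k, hk⟩ := exists_nat_one_div_lt (sub_pos.2 hlt)
    obtain ⟨v, hv, hτv, hXv⟩ := h k
    linarith [isMaxOn_iff.1 hsmax v ⟨hτv, hv.1⟩]

lemma measurableSet_reachedBy (hXad : StronglyAdapted ℱ X) (hX : ∀ ω, Continuous fun t => X t ω)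
    (hτ : IsStoppingTime ℱ fun ω => (τ ω : WithTop ℝ≥0)) (t : ℝ≥0) :
    MeasurableSet[ℱ t] (reachedBy X τ a t) := by
  obtain ⟨D, hDc, hD⟩ := TopologicalSpace.exists_countable_dense ℝ≥0
  rw [reachedBy_eq_iInter_iUnion hX hD]
  refine .iInter fun k => .biUnion ((hDc.insert t).mono inter_subset_right) fun v hv => ?_
  exact ℱ.mono hv.1 _ ((isStoppingTime_coe_iff.1 hτ v).inter
    (measurableSet_lt measurable_const (hXad v).measurable))

lemma isStoppingTime_firstReachTime (hXad : StronglyAdapted ℱ X)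
    (hX : ∀ ω, Continuous fun t => X t ω) (hτ : IsStoppingTime ℱ fun ω => (τ ω : WithTop ℝ≥0))
    (t : ℝ≥0) : IsStoppingTime ℱ fun ω => (firstReachTime X τ a t ω : WithTop ℝ≥0) := by
  refine isStoppingTime_coe_iff.2 fun u => ?_
  rcases lt_or_ge u t with hut | htu
  · simp_rw [firstReachTime_le_iff hX hut]
    exact measurableSet_reachedBy hXad hX hτ u
  · simp_rw [(firstReachTime_le hX t _).trans htu, ofPred_true]
    exact .univ

end Reaching


lemma le_iSup_max_iff_exists_le {X : ℝ≥0 → Ω → ℝ} (hX : ∀ ω, Continuous fun t => X t ω)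
    {a : ℝ} (ha : 0 < a) (τ : Ω → ℝ≥0) {ω : Ω} (hlim : Tendsto (X · ω) atTop (𝓝 0)) :
    a ≤ ⨆ s, X (max (τ ω) s) ω ↔ ∃ s, τ ω ≤ s ∧ a ≤ X s ω := by
  rw [le_iSup_iff_exists_le_of_tendsto_zero (f := fun s => X (max (τ ω) s) ω)
    ((hX ω).comp (continuous_const.max continuous_id))
    (by rw [cocompact_eq_atTop]
        exact hlim.comp (tendsto_atTop_mono (le_max_right _) tendsto_id)) ha]
  exact ⟨fun ⟨s, hs⟩ => ⟨_, le_max_left _ _, hs⟩,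
    fun ⟨s, hτs, hs⟩ => ⟨s, by rwa [max_eq_right hτs]⟩⟩

lemma tendsto_setIntegral_zero_of_norm_le {E : Type*} [NormedAddCommGroup E] [NormedSpace ℝ E]
    {μ : Measure Ω} [IsFiniteMeasure μ] {f : ℕ → Ω → E} {S : ℕ → Set Ω}
    (hS : ∀ n, MeasurableSet (S n)) (hf : ∀ n, AEStronglyMeasurable (f n) μ) {C : ℝ}
    (hC : ∀ n, ∀ ω ∈ S n, ‖f n ω‖ ≤ C) (hlim : ∀ᵐ ω ∂μ, Tendsto (f · ω) atTop (𝓝 0)) :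
    Tendsto (fun n => ∫ ω in S n, f n ω ∂μ) atTop (𝓝 0) := by
  simp_rw [← integral_indicator (hS _)]
  rw [← integral_zero Ω E]
  refine tendsto_integral_of_dominated_convergence (fun _ => |C|)
    (fun n => (hf n).indicator (hS n)) (integrable_const _) (fun n => ae_of_all _ fun ω => ?_) ?_
  · by_cases hω : ω ∈ S n
    · simpa [indicator_of_mem hω] using (hC n ω hω).trans (le_abs_self C)
    · simp [indicator_of_notMem hω]
  · filter_upwards [hlim] with ω hω
    refine squeeze_zero_norm (fun n => norm_indicator_le_norm_self _ ω) ?_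
    exact tendsto_zero_iff_norm_tendsto_zero.1 hω

section Martingale

variable {P : Measure Ω} [IsFiniteMeasure P] {M : ℝ≥0 → Ω → ℝ} {τ : Ω → ℝ≥0} {a : ℝ}

lemma integrable_min_one_div {f : Ω → ℝ} (hf : AEStronglyMeasurable f P) (hf0 : ∀ ω, 0 ≤ f ω)
    (ha : 0 ≤ a) : Integrable (fun ω => min 1 (f ω / a)) P :=
  .of_bound (continuous_const.min (continuous_id.div_const a) |>.comp_aestronglyMeasurable hf) 1
    (ae_of_all _ fun ω => by
      rw [Real.norm_of_nonneg (le_min zero_le_one (div_nonneg (hf0 ω) ha))]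
      exact min_le_left _ _)

theorem Martingale.setIntegral_inter_le_eq_mul_measureReal_reachedBy_add (hM : Martingale M ℱ P)
    (hMcont : ∀ ω, Continuous fun t => M t ω) (hτ : IsStoppingTime ℱ fun ω => (τ ω : WithTop ℝ≥0))
    {B : Set Ω} (hB : MeasurableSet[hτ.measurableSpace] B) (hBa : ∀ ω ∈ B, M (τ ω) ω < a)
    (t : ℝ≥0) :
    ∫ ω in B ∩ {ω | τ ω ≤ t}, M (τ ω) ω ∂P =
      a * P.real (B ∩ reachedBy M τ a t) +
        ∫ ω in (B ∩ {ω | τ ω ≤ t}) \ reachedBy M τ a t, M t ω ∂P := by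
  set Bt := B ∩ {ω | τ ω ≤ t}
  set H := reachedBy M τ a t
  set σ := firstReachTime M τ a t
  have hτt := hτ.min_const t
  have hσ : IsStoppingTime ℱ fun ω => (σ ω : WithTop ℝ≥0) :=
    isStoppingTime_firstReachTime hM.stronglyAdapted hMcont hτ t
  have hBt : MeasurableSet[hτt.measurableSpace] Bt := by
    have := (hτ.measurableSet_inter_le_const_iff B t).1 (hB.inter (hτ.measurableSet_le' t))
    simpa only [inter_assoc, inter_self, WithTop.coe_le_coe] using this
  have hBtσ : MeasurableSet[hσ.measurableSpace] Bt :=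
    hτt.measurableSpace_mono hσ (fun ω => by
      simpa only [← WithTop.coe_min, WithTop.coe_le_coe] using min_le_firstReachTime hMcont t ω)
      _ hBt
  have hBtm : MeasurableSet Bt := hτt.measurableSpace_le _ hBt
  have hH : MeasurableSet H := ℱ.le t _ (measurableSet_reachedBy hM.stronglyAdapted hMcont hτ t)
  have hBtH : Bt ∩ H = B ∩ H := by
    ext ω
    exact ⟨fun ⟨⟨hB, _⟩, hH⟩ => ⟨hB, hH⟩,
      fun ⟨hB, hH⟩ => ⟨⟨hB, hH.choose_spec.1.1.trans hH.choose_spec.1.2⟩, hH⟩⟩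
  calc ∫ ω in Bt, M (τ ω) ω ∂P = ∫ ω in Bt, stoppedValue M (fun ω => min ↑(τ ω) ↑t) ω ∂P := by
        refine setIntegral_congr_fun hBtm fun ω hω => ?_
        rw [stoppedValue, ← WithTop.coe_min, min_eq_left (show τ ω ≤ t from hω.2)]
        rfl
    _ = ∫ ω in Bt, M (σ ω) ω ∂P :=
        (hM.setIntegral_stoppedValue_of_le_const_of_continuous hMcont hτt
          (fun _ => min_le_right _ _) hBt).trans
        (hM.setIntegral_stoppedValue_of_le_const_of_continuous hMcont hσ
          (fun ω => WithTop.coe_le_coe.2 (firstReachTime_le hMcont t ω)) hBtσ).symm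
    _ = ∫ ω in Bt ∩ H, M (σ ω) ω ∂P + ∫ ω in (Bt \ H), M (σ ω) ω ∂P :=
        (integral_inter_add_sdiff hH (hM.integrable_stoppedValue_of_le_const_of_continuous hMcont hσ
          (fun ω => WithTop.coe_le_coe.2 (firstReachTime_le hMcont t ω))).integrableOn).symm
    _ = a * P.real (B ∩ H) + ∫ ω in (Bt \ H), M t ω ∂P := by
        rw [setIntegral_congr_fun (hBtm.inter hH) fun ω hω =>
            apply_firstReachTime hMcont hω.2 (hBa ω hω.1.1),
          setIntegral_congr_fun (hBtm.diff hH) fun ω hω =>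
            congrArg (M · ω) (firstReachTime_of_notMem hω.2),
          setIntegral_const, hBtH, smul_eq_mul, mul_comm]

theorem Martingale.setIntegral_eq_mul_measureReal_reached (hM : Martingale M ℱ P)
    (hMnonneg : ∀ t ω, 0 ≤ M t ω) (hMcont : ∀ ω, Continuous fun t => M t ω)
    (hMlim : ∀ᵐ ω ∂P, Tendsto (M · ω) atTop (𝓝 0))
    (hτ : IsStoppingTime ℱ fun ω => (τ ω : WithTop ℝ≥0))
    {B : Set Ω} (hB : MeasurableSet[hτ.measurableSpace] B) (hBa : ∀ ω ∈ B, M (τ ω) ω < a) :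
    ∫ ω in B, M (τ ω) ω ∂P = a * P.real (B ∩ {ω | ∃ s, τ ω ≤ s ∧ a ≤ M s ω}) := by
  set Bn : ℕ → Set Ω := fun n => B ∩ {ω | τ ω ≤ n}
  have hBnm : ∀ n, MeasurableSet (Bn n) := fun n =>
    hτ.measurableSpace_le _ (hB.inter <| by
      simpa only [WithTop.coe_le_coe] using hτ.measurableSet_le' (n : ℝ≥0))
  have hBn_mono : Monotone Bn := fun i j hij =>
    inter_subset_inter_right _ fun ω (hω : τ ω ≤ i) => hω.trans (Nat.cast_le.2 hij)
  have hBn_union : ⋃ n, Bn n = B := by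
    rw [← inter_iUnion, inter_eq_left]
    exact fun ω _ => mem_iUnion.2 ⟨⌈τ ω⌉₊, Nat.le_ceil (τ ω)⟩
  have hint : IntegrableOn (fun ω => M (τ ω) ω) B P :=
    Measure.integrableOn_of_bounded (measure_ne_top P B)
      ((measurable_apply_of_isStoppingTime hM.stronglyAdapted hMcont hτ).mono
        hτ.measurableSpace_le le_rfl).aestronglyMeasurable
      ((ae_restrict_mem (hτ.measurableSpace_le _ hB)).mono fun ω hω => by
        rw [Real.norm_of_nonneg (hMnonneg _ ω)]; exact (hBa ω hω).le)
  have hlim_left : Tendsto (fun n : ℕ => ∫ ω in Bn n, M (τ ω) ω ∂P) atTop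
      (𝓝 (∫ ω in B, M (τ ω) ω ∂P)) := by
    simpa only [hBn_union] using
      tendsto_setIntegral_of_monotone hBnm hBn_mono (hBn_union.symm ▸ hint)
  have hlim_reached : Tendsto (fun n : ℕ => a * P.real (B ∩ reachedBy M τ a n)) atTop
      (𝓝 (a * P.real (B ∩ {ω | ∃ s, τ ω ≤ s ∧ a ≤ M s ω}))) := by
    refine ((ENNReal.tendsto_toReal (measure_ne_top P _)).comp ?_).const_mul a
    rw [← iUnion_reachedBy_natCast, inter_iUnion]
    exact tendsto_measure_iUnion_atTop fun i j hij =>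
      inter_subset_inter_right _ (reachedBy_mono (Nat.cast_le.2 hij))
  have hlim_unreached : Tendsto (fun n : ℕ => ∫ ω in Bn n \ reachedBy M τ a n, M n ω ∂P) atTop
      (𝓝 0) := by
    refine tendsto_setIntegral_zero_of_norm_le (C := a)
      (fun n => (hBnm n).diff (ℱ.le n _ (measurableSet_reachedBy hM.stronglyAdapted hMcont hτ n)))
      (fun n => (hM.integrable n).1) (fun n ω hω => ?_) (hMlim.mono fun ω hω => ?_)
    · rw [Real.norm_of_nonneg (hMnonneg _ ω)]
      exact (lt_of_notMem_reachedBy hω.2 hω.1.2).le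
    · exact hω.comp tendsto_natCast_atTop_atTop
  have hlim_right := hlim_reached.add hlim_unreached
  rw [add_zero] at hlim_right
  exact tendsto_nhds_unique hlim_left <| hlim_right.congr fun n =>
    (hM.setIntegral_inter_le_eq_mul_measureReal_reachedBy_add hMcont hτ hB hBa n).symm

theorem Martingale.setIntegral_min_one_div_eq (hM : Martingale M ℱ P)
    (hMnonneg : ∀ t ω, 0 ≤ M t ω) (hMcont : ∀ ω, Continuous fun t => M t ω)
    (hMlim : ∀ᵐ ω ∂P, Tendsto (M · ω) atTop (𝓝 0))
    (hτ : IsStoppingTime ℱ fun ω => (τ ω : WithTop ℝ≥0)) (ha : 0 < a)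
    {B : Set Ω} (hB : MeasurableSet[hτ.measurableSpace] B) :
    ∫ ω in B, min 1 (M (τ ω) ω / a) ∂P = P.real (B ∩ {ω | ∃ s, τ ω ≤ s ∧ a ≤ M s ω}) := by
  set U := {ω | ∃ s, τ ω ≤ s ∧ a ≤ M s ω}
  set D := {ω | M (τ ω) ω < a}
  have hMτ := measurable_apply_of_isStoppingTime hM.stronglyAdapted hMcont hτ
  have hD : MeasurableSet[hτ.measurableSpace] D := measurableSet_lt hMτ measurable_const
  have hBm := hτ.measurableSpace_le _ hB
  have hDm := hτ.measurableSpace_le _ hD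
  have hbelow : ∫ ω in B ∩ D, min 1 (M (τ ω) ω / a) ∂P = P.real (B ∩ D ∩ U) := by
    rw [setIntegral_congr_fun (hBm.inter hDm) fun ω hω =>
        min_eq_right ((div_le_one ha).2 (le_of_lt hω.2)), integral_div,
      hM.setIntegral_eq_mul_measureReal_reached hMnonneg hMcont hMlim hτ (hB.inter hD)
        fun ω hω => hω.2, mul_div_cancel_left₀ _ ha.ne']
  have habove : ∫ ω in B \ D, min 1 (M (τ ω) ω / a) ∂P = P.real ((B \ D) ∩ U) := by
    have hBDU : B \ D ⊆ U := fun ω hω => ⟨τ ω, le_rfl, not_lt.1 hω.2⟩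
    rw [setIntegral_congr_fun (hBm.diff hDm) fun ω hω =>
        min_eq_left ((one_le_div ha).2 (not_lt.1 hω.2)),
      setIntegral_const, smul_eq_mul, mul_one, inter_eq_left.2 hBDU]
  have hint := integrable_min_one_div (P := P)
    (hMτ.mono hτ.measurableSpace_le le_rfl).aestronglyMeasurable (fun ω => hMnonneg _ ω) ha.le
  rw [← integral_inter_add_sdiff hDm hint.integrableOn, hbelow, habove, inter_right_comm,
    ← inter_sdiff_right_comm, measureReal_inter_add_sdiff hDm]

theorem Martingale.condExp_indicator_reached_ae_eq (hM : Martingale M ℱ P)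
    (hMnonneg : ∀ t ω, 0 ≤ M t ω) (hMcont : ∀ ω, Continuous fun t => M t ω)
    (hMlim : ∀ᵐ ω ∂P, Tendsto (M · ω) atTop (𝓝 0))
    (hτ : IsStoppingTime ℱ fun ω => (τ ω : WithTop ℝ≥0)) (ha : 0 < a) :
    P[{ω | ∃ s, τ ω ≤ s ∧ a ≤ M s ω}.indicator fun _ => (1 : ℝ) | hτ.measurableSpace]
      =ᵐ[P] fun ω => min 1 (M (τ ω) ω / a) := by
  have hU : MeasurableSet {ω | ∃ s, τ ω ≤ s ∧ a ≤ M s ω} := by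
    rw [← iUnion_reachedBy_natCast]
    exact .iUnion fun n => ℱ.le n _ (measurableSet_reachedBy hM.stronglyAdapted hMcont hτ n)
  have hMτ := measurable_apply_of_isStoppingTime hM.stronglyAdapted hMcont hτ
  refine (ae_eq_condExp_of_forall_setIntegral_eq hτ.measurableSpace_le
    ((integrable_const 1).indicator hU) (fun B hB _ => ?_) (fun B hB _ => ?_)
    (measurable_const.min (hMτ.div_const a)).aestronglyMeasurable).symm
  · exact (integrable_min_one_div (hMτ.mono hτ.measurableSpace_le le_rfl).aestronglyMeasurable
      (fun ω => hMnonneg _ ω) ha.le).integrableOn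
  · rw [hM.setIntegral_min_one_div_eq hMnonneg hMcont hMlim hτ ha hB,
      setIntegral_indicator hU, setIntegral_const, smul_eq_mul, mul_one]

end Martingale

end MeasureTheory

open MeasureTheory

theorem doob_maximal_identity_general
    {Ω : Type*} {m : MeasurableSpace Ω} {P : Measure Ω} [IsProbabilityMeasure P]
    (ℱ : Filtration ℝ≥0 m) (M : ℝ≥0 → Ω → ℝ)
    (hMmart : Martingale M ℱ P)
    (hMnonneg : ∀ t ω, 0 ≤ M t ω)
    (hMcont : ∀ ω, Continuous fun t => M t ω)
    (hMlim : ∀ᵐ ω ∂P, Tendsto (fun t => M t ω) atTop (nhds (0 : ℝ)))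
    (τ : Ω → ℝ≥0) (hτ : IsStoppingTime ℱ (fun ω => (τ ω : WithTop ℝ≥0))) (a : ℝ) (ha : 0 < a) :
    P[Set.indicator {ω | a ≤ ⨆ s, M (max (τ ω) s) ω} (fun _ => (1 : ℝ)) |
        hτ.measurableSpace]
      =ᵐ[P] fun ω => min 1 (M (τ ω) ω / a) := by
  have hsup : {ω | a ≤ ⨆ s, M (max (τ ω) s) ω} =ᵐ[P] {ω | ∃ s, τ ω ≤ s ∧ a ≤ M s ω} :=
    hMlim.mono fun ω hω => propext (le_iSup_max_iff_exists_le hMcont ha τ hω)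
  exact (condExp_congr_ae (indicator_ae_eq_of_ae_eq_set hsup)).trans
    (hMmart.condExp_indicator_reached_ae_eq hMnonneg hMcont hMlim hτ ha)

/-- **Doob's maximal identity.** Let `M` be a nonnegative continuous martingale
with `M 0 = 1` a.s. and `M t → 0` a.s. as `t → ∞`. Let `τ` be an (a.s. finite, hence here
finite-valued) stopping time of the filtration `ℱ` and let `a > 0`. Then, almost surely,
`P[sup_{s ∈ [τ, ∞)} M s ≥ a | 𝓕_τ] = min 1 (M τ / a)`. -/
theorem doob_maximal_identity
    {Ω : Type*} {m : MeasurableSpace Ω} {P : Measure Ω} [IsProbabilityMeasure P]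
    (ℱ : Filtration ℝ≥0 m) (M : ℝ≥0 → Ω → ℝ)
    (hMmart : Martingale M ℱ P)
    (hMnonneg : ∀ t ω, 0 ≤ M t ω)
    (hMcont : ∀ ω, Continuous fun t => M t ω)
    (hM0 : ∀ᵐ ω ∂P, M 0 ω = 1)
    (hMlim : ∀ᵐ ω ∂P, Tendsto (fun t => M t ω) atTop (nhds (0 : ℝ)))
    (τ : Ω → ℝ≥0) (hτ : IsStoppingTime ℱ (fun ω => (τ ω : WithTop ℝ≥0))) (a : ℝ) (ha : 0 < a) :
    P[Set.indicator {ω | a ≤ ⨆ s, M (max (τ ω) s) ω} (fun _ => (1 : ℝ)) |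
        hτ.measurableSpace]
      =ᵐ[P] fun ω => min 1 (M (τ ω) ω / a) :=
  doob_maximal_identity_general ℱ M hMmart hMnonneg hMcont hMlim τ hτ a ha
end

section
/- Let ρ := inf{t ≥ 0 : M_t = M*_∞} be the (a.s. unique and a.s. finite) time at which M attains its overall maximum. Then for every t ≥ 0, almost surely, P[ρ > t | 𝓕_t] = M_t / M*_t. -/
/-!
Pathwise, `t < ρ` holds exactly when `M` exceeds its running maximum `M*_t` at some time after
`t`: the overall maximum is attained because `M → 0`. So it suffices to show
`P[∃ s ≥ t, ξ < M_s | 𝓕_t] = M_t / ξ` for every `𝓕_t`-measurable level `ξ ≥ M_t`, and take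
`ξ = M*_t`. Stopping `M` when it first exceeds `ξ` after `t`, or at time `t + k`, optional
sampling gives `E[ξ 1{hit before t + k} + M_{t+k} 1{no hit}; B] = E[M_t; B]` for `B ∈ 𝓕_t`, and
letting `k → ∞` (where `M_{t+k} → 0`) gives `E[ξ 1{hit}; B] = E[M_t; B]`. The hitting time is
approximated from above by dyadic stopping times; their stopped values are conditional
expectations of `M_{t+k}`, hence uniformly integrable, and Vitali's theorem passes to the limit.
Integrability of `ξ` is removed by localising on `{ξ ≤ c}`.
-/

open MeasureTheory Filter Set
open scoped NNReal Topology

section Path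

variable {f : ℝ≥0 → ℝ} {a b : ℝ≥0}

-- In `ℝ`, `⨆ s ∈ Icc a b, f s` also takes the value `sSup ∅ = 0` at every `s ∉ Icc a b`,
-- hence the hypothesis `0 ≤ f`.
lemma exists_biSup_Icc_eq (hf : Continuous f) (h0 : ∀ s, 0 ≤ f s) (hab : a ≤ b) :
    ∃ c ∈ Icc a b, IsMaxOn f (Icc a b) c ∧ ⨆ s ∈ Icc a b, f s = f c := by
  obtain ⟨c, hc, hmax⟩ := isCompact_Icc.exists_isMaxOn (nonempty_Icc.2 hab) hf.continuousOn
  have hle : ∀ s, ⨆ _ : s ∈ Icc a b, f s ≤ f c := fun s => Real.iSup_le (fun hs => hmax hs) (h0 c)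
  refine ⟨c, hc, hmax, le_antisymm (Real.iSup_le hle (h0 c)) ?_⟩
  exact le_ciSup_of_le ⟨f c, forall_mem_range.2 hle⟩ c (ciSup_pos (f := fun _ => f c) hc).ge

lemma le_biSup_Icc (hf : Continuous f) (h0 : ∀ s, 0 ≤ f s) {s : ℝ≥0} (hs : s ∈ Icc a b) :
    f s ≤ ⨆ s ∈ Icc a b, f s := by
  obtain ⟨c, -, hmax, hsup⟩ := exists_biSup_Icc_eq hf h0 (hs.1.trans hs.2)
  exact hsup ▸ hmax hs

lemma lt_biSup_Icc_iff (hf : Continuous f) (h0 : ∀ s, 0 ≤ f s) (hab : a ≤ b) {x : ℝ} :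
    x < ⨆ s ∈ Icc a b, f s ↔ ∃ s ∈ Icc a b, x < f s := by
  obtain ⟨c, hc, hmax, hsup⟩ := exists_biSup_Icc_eq hf h0 hab
  rw [hsup]
  exact ⟨fun h => ⟨c, hc, h⟩, fun ⟨s, hs, h⟩ => h.trans_le (hmax hs)⟩

lemma exists_mem_Icc_lt_iff_exists_denseSeq (hf : Continuous f) (hab : a ≤ b) (x : ℝ) :
    (∃ s ∈ Icc a b, x < f s) ↔
      ∃ n, x < f (projIcc a b hab (TopologicalSpace.denseSeq ℝ≥0 n)) := by
  refine ⟨fun ⟨s, hs, hxs⟩ => ?_, fun ⟨n, hn⟩ => ⟨_, Subtype.prop _, hn⟩⟩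
  have hdense : DenseRange (projIcc a b hab ∘ TopologicalSpace.denseSeq ℝ≥0) :=
    (projIcc_surjective hab).denseRange.comp (TopologicalSpace.denseRange_denseSeq ℝ≥0)
      continuous_projIcc
  exact hdense.exists_mem_open (isOpen_lt continuous_const (hf.comp continuous_subtype_val))
    ⟨⟨s, hs⟩, hxs⟩

lemma exists_forall_le_of_tendsto_zero (hf : Continuous f) (h0 : ∀ s, 0 ≤ f s)
    (hlim : Tendsto f atTop (𝓝 0)) : ∃ c, ∀ s, f s ≤ f c := by
  by_cases hpos : ∃ c, 0 < f c
  · obtain ⟨c, hc⟩ := hpos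
    refine hf.exists_forall_ge' c ?_
    rw [cocompact_eq_atTop]
    exact hlim.eventually (eventually_le_nhds hc)
  · push Not at hpos
    exact ⟨0, fun s => (hpos s).trans (h0 0)⟩

lemma lt_sInf_setOf_eq_iSup_iff (hf : Continuous f) (h0 : ∀ s, 0 ≤ f s)
    (hlim : Tendsto f atTop (𝓝 0)) (t : ℝ≥0) :
    t < sInf {u | f u = ⨆ v, f v} ↔ ∃ s, t ≤ s ∧ ⨆ r ∈ Icc 0 t, f r < f s := by
  obtain ⟨c, hc⟩ := exists_forall_le_of_tendsto_zero hf h0 hlim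
  have hbdd : BddAbove (range f) := ⟨f c, forall_mem_range.2 hc⟩
  set S := {u | f u = ⨆ v, f v}
  have hρ : sInf S ∈ S := (isClosed_eq hf continuous_const).csInf_mem
    ⟨c, le_antisymm (le_ciSup hbdd c) (ciSup_le hc)⟩ (OrderBot.bddBelow S)
  obtain ⟨c', hc', hmax', hsup'⟩ := exists_biSup_Icc_eq hf h0 zero_le
  rw [hsup']
  constructor
  · intro hlt
    refine ⟨sInf S, hlt.le, (le_ciSup hbdd c').trans_eq hρ.symm |>.lt_of_ne fun heq => ?_⟩
    exact hlt.not_ge ((csInf_le (OrderBot.bddBelow S) (heq.trans hρ : c' ∈ S)).trans hc'.2)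
  · rintro ⟨s, -, hlt⟩
    by_contra! hle
    have : f (sInf S) ≤ f c' := hmax' ⟨zero_le, hle⟩
    have : f s ≤ f (sInf S) := (le_ciSup hbdd s).trans_eq hρ.symm
    linarith

lemma apply_sInf_setOf_lt_eq (hf : Continuous f) {t T : ℝ≥0} {x : ℝ} (ht : f t ≤ x)
    (hne : {s | s ∈ Icc t T ∧ x < f s}.Nonempty) :
    f (sInf {s | s ∈ Icc t T ∧ x < f s}) = x := by
  set S := {s | s ∈ Icc t T ∧ x < f s}
  have hbdd : BddBelow S := OrderBot.bddBelow S
  have htσ : t ≤ sInf S := le_csInf hne fun s hs => hs.1.1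
  refine le_antisymm ?_ ?_
  · by_contra! hlt
    rcases htσ.eq_or_lt with heq | htσ
    · exact hlt.not_ge (heq ▸ ht)
    obtain ⟨l, hl, hsub⟩ := exists_Ioc_subset_of_mem_nhds
      ((isOpen_lt continuous_const hf).mem_nhds hlt) ⟨t, htσ⟩
    obtain ⟨s, hs₁, hs₂⟩ := exists_between (max_lt hl htσ)
    have hσT : sInf S ≤ T := let ⟨r, hr⟩ := hne; (csInf_le hbdd hr).trans hr.1.2
    have hsS : s ∈ S :=
      ⟨⟨(le_max_right l t).trans hs₁.le, hs₂.le.trans hσT⟩,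
        hsub ⟨(le_max_left l t).trans_lt hs₁, hs₂.le⟩⟩
    exact hs₂.not_ge (csInf_le hbdd hsS)
  · have hmem : sInf S ∈ closure S := csInf_mem_closure hne hbdd
    exact closure_minimal (fun s hs => hs.2.le) (isClosed_le continuous_const hf) hmem

end Path

section StoppedAtLevel

variable {f : ℝ≥0 → ℝ} {x : ℝ} {t T : ℝ≥0}

-- For continuous `f` with `f t ≤ x`, this is the value at time `T` of `f` stopped when it first
-- exceeds `x` after `t`.
open Classical in
noncomputable def stoppedAtLevel (f : ℝ≥0 → ℝ) (x : ℝ) (t T : ℝ≥0) : ℝ :=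
  if ∃ s ∈ Icc t T, x < f s then x else f T

lemma stoppedAtLevel_le (hT : t ≤ T) : stoppedAtLevel f x t T ≤ x := by
  unfold stoppedAtLevel
  split_ifs with h
  · exact le_rfl
  · push Not at h
    exact h T ⟨hT, le_rfl⟩

lemma stoppedAtLevel_nonneg (h0 : ∀ s, 0 ≤ f s) (hx : 0 ≤ x) : 0 ≤ stoppedAtLevel f x t T := by
  unfold stoppedAtLevel
  split_ifs
  exacts [hx, h0 T]

open Classical in
lemma tendsto_stoppedAtLevel_atTop (hlim : Tendsto f atTop (𝓝 0)) :
    Tendsto (fun k : ℕ => stoppedAtLevel f x t (t + k)) atTop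
      (𝓝 (if ∃ s, t ≤ s ∧ x < f s then x else 0)) := by
  split_ifs with hhit
  · obtain ⟨s, hts, hs⟩ := hhit
    refine tendsto_const_nhds.congr' <| (eventually_ge_atTop ⌈s⌉₊).mono fun k hk => ?_
    have hsk : s ≤ t + k := (Nat.le_ceil s).trans ((Nat.cast_le.2 hk).trans le_add_self)
    exact (if_pos ⟨s, ⟨hts, hsk⟩, hs⟩).symm
  · have hno : ∀ k : ℕ, stoppedAtLevel f x t (t + k) = f (t + k) := fun k =>
      if_neg fun ⟨s, hs, hxs⟩ => hhit ⟨s, hs.1, hxs⟩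
    simp only [hno]
    exact hlim.comp (tendsto_atTop_mono (fun k => le_add_self) tendsto_natCast_atTop_atTop)

end StoppedAtLevel

section DyadicHitTime

variable (f : ℝ≥0 → ℝ) (x : ℝ) (t : ℝ≥0) (k m : ℕ)

/- Optional sampling is only available for stopping times with countable range, so the first time
after `t` at which the path exceeds the level `x` is approximated from above on the grid
`t + j / 2 ^ m`, capped at the horizon `t + k`. -/
noncomputable def dyadicHitIndex : ℕ :=
  sInf {j | k * 2 ^ m ≤ j ∨ ∃ s ∈ Icc t (t + j / 2 ^ m), x < f s}

noncomputable def dyadicHitTime : ℝ≥0 := t + dyadicHitIndex f x t k m / 2 ^ m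

variable {f x t k m}

lemma dyadicHitIndex_spec : k * 2 ^ m ≤ dyadicHitIndex f x t k m ∨
    ∃ s ∈ Icc t (dyadicHitTime f x t k m), x < f s :=
  Nat.sInf_mem (s := {j | k * 2 ^ m ≤ j ∨ ∃ s ∈ Icc t (t + j / 2 ^ m), x < f s})
    ⟨_, Or.inl le_rfl⟩

lemma le_dyadicHitTime : t ≤ dyadicHitTime f x t k m := le_self_add

lemma dyadicHitTime_le : dyadicHitTime f x t k m ≤ t + k := by
  unfold dyadicHitTime
  gcongr
  have hN : dyadicHitIndex f x t k m ≤ k * 2 ^ m := Nat.sInf_le (Or.inl le_rfl)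
  rw [div_le_iff₀ (by positivity)]
  exact_mod_cast hN

lemma dyadicHitTime_eq_or_exists : dyadicHitTime f x t k m = t + k ∨
    ∃ s ∈ Icc t (dyadicHitTime f x t k m), x < f s := by
  refine dyadicHitIndex_spec.imp_left fun hN => le_antisymm dyadicHitTime_le ?_
  unfold dyadicHitTime
  gcongr
  rw [le_div_iff₀ (by positivity)]
  exact_mod_cast hN

lemma dyadicHitTime_le_add {s : ℝ≥0} (hts : t ≤ s) (hxs : x < f s) :
    dyadicHitTime f x t k m ≤ s + 1 / 2 ^ m := by
  set j := ⌈((s : ℝ) - t) * 2 ^ m⌉₊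
  have h2 : (0 : ℝ) < 2 ^ m := by positivity
  have hst : (0 : ℝ) ≤ (s - t) * 2 ^ m := mul_nonneg (sub_nonneg.2 (NNReal.coe_le_coe.2 hts)) h2.le
  have hsj : s ≤ t + j / 2 ^ m := by
    rw [← NNReal.coe_le_coe]
    push_cast
    rw [← sub_le_iff_le_add', le_div_iff₀ h2]
    exact Nat.le_ceil _
  have hjs : (j : ℝ) / 2 ^ m ≤ (s - t) + 1 / 2 ^ m := by
    calc (j : ℝ) / 2 ^ m ≤ (((s : ℝ) - t) * 2 ^ m + 1) / 2 ^ m :=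
          div_le_div_of_nonneg_right (Nat.ceil_lt_add_one hst).le h2.le
      _ = (s - t) + 1 / 2 ^ m := by rw [add_div, mul_div_cancel_right₀ _ h2.ne']
  calc dyadicHitTime f x t k m ≤ t + j / 2 ^ m := by
        unfold dyadicHitTime
        gcongr
        exact Nat.sInf_le (Or.inr ⟨s, ⟨hts, hsj⟩, hxs⟩)
    _ ≤ s + 1 / 2 ^ m := by
        rw [← NNReal.coe_le_coe]
        push_cast
        linarith

lemma dyadicHitTime_eq_of_forall_le (h : ∀ s ∈ Icc t (t + k), f s ≤ x) :
    dyadicHitTime f x t k m = t + k :=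
  dyadicHitTime_eq_or_exists.resolve_right fun ⟨s, hs, hxs⟩ =>
    (h s ⟨hs.1, hs.2.trans dyadicHitTime_le⟩).not_gt hxs

lemma tendsto_apply_dyadicHitTime (hf : Continuous f) (ht : f t ≤ x) :
    Tendsto (fun m => f (dyadicHitTime f x t k m)) atTop
      (𝓝 (stoppedAtLevel f x t (t + k))) := by
  unfold stoppedAtLevel
  split_ifs with hhit
  swap
  · push Not at hhit
    simp only [dyadicHitTime_eq_of_forall_le hhit, tendsto_const_nhds]
  set S := {s | s ∈ Icc t (t + k) ∧ x < f s}
  have hne : S.Nonempty := let ⟨s, hs, hxs⟩ := hhit; ⟨s, hs, hxs⟩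
  have hbdd : BddBelow S := OrderBot.bddBelow S
  have hσ : ∀ m, sInf S ≤ dyadicHitTime f x t k m := fun m => by
    rcases dyadicHitTime_eq_or_exists (f := f) (x := x) (t := t) (k := k) (m := m)
      with hT | ⟨s, hs, hxs⟩
    · obtain ⟨r, hr⟩ := hne
      exact (csInf_le hbdd hr).trans (hT ▸ hr.1.2)
    · exact (csInf_le hbdd ⟨⟨hs.1, hs.2.trans dyadicHitTime_le⟩, hxs⟩).trans hs.2
  have hmesh : Tendsto (fun m : ℕ => (1 : ℝ≥0) / 2 ^ m) atTop (𝓝 0) := by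
    simpa only [one_div_pow] using NNReal.tendsto_pow_atTop_nhds_zero_of_lt_one
      (r := 1 / 2) (by norm_num)
  have hτ : Tendsto (fun m => dyadicHitTime f x t k m) atTop (𝓝 (sInf S)) := by
    refine tendsto_order.2 ⟨fun a ha => .of_forall fun m => ha.trans_le (hσ m), fun a ha => ?_⟩
    obtain ⟨s, hs, hsa⟩ := exists_lt_of_csInf_lt hne ha
    have hlim : Tendsto (fun m : ℕ => s + 1 / 2 ^ m) atTop (𝓝 s) := by
      simpa using tendsto_const_nhds.add hmesh
    filter_upwards [(tendsto_order.1 hlim).2 a hsa] with m hm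
    exact (dyadicHitTime_le_add hs.1.1 hs.2).trans_lt hm
  have hfσ : f (sInf S) = x := apply_sInf_setOf_lt_eq hf ht hne
  have h := (hf.tendsto _).comp hτ
  rwa [hfσ] at h

end DyadicHitTime

section Measurability

variable {Ω : Type*} {m0 : MeasurableSpace Ω} {ℱ : Filtration ℝ≥0 m0} {M : ℝ≥0 → Ω → ℝ}
  {ξ : Ω → ℝ}

lemma measurableSet_exists_mem_Icc_lt (hadp : StronglyAdapted ℱ M)
    (hcont : ∀ ω, Continuous (M · ω)) {a b : ℝ≥0} (hξ : Measurable[ℱ b] ξ) (hab : a ≤ b) :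
    MeasurableSet[ℱ b] {ω | ∃ s ∈ Icc a b, ξ ω < M s ω} := by
  simp_rw [exists_mem_Icc_lt_iff_exists_denseSeq (hcont _) hab, ofPred_exists]
  exact .iUnion fun n => measurableSet_lt hξ
    ((hadp _).measurable.mono (ℱ.mono (projIcc a b hab _).2.2) le_rfl)

lemma measurableSet_exists_le_lt (hadp : StronglyAdapted ℱ M)
    (hcont : ∀ ω, Continuous (M · ω)) {t : ℝ≥0} (hξ : Measurable[ℱ t] ξ) :
    MeasurableSet {ω | ∃ s, t ≤ s ∧ ξ ω < M s ω} := by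
  have h : {ω | ∃ s, t ≤ s ∧ ξ ω < M s ω} =
      ⋃ k : ℕ, {ω | ∃ s ∈ Icc t (t + k), ξ ω < M s ω} := by
    ext ω
    simp only [mem_ofPred_eq, mem_iUnion, mem_Icc]
    refine ⟨fun ⟨s, hts, hs⟩ => ⟨⌈s⌉₊, s, ⟨hts, (Nat.le_ceil s).trans le_add_self⟩, hs⟩,
      fun ⟨k, s, hs, hξs⟩ => ⟨s, hs.1, hξs⟩⟩
  rw [h]
  exact .iUnion fun k => ℱ.le _ _ <| measurableSet_exists_mem_Icc_lt hadp hcont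
    (hξ.mono (ℱ.mono le_self_add) le_rfl) le_self_add

lemma stronglyMeasurable_biSup_Icc (hadp : StronglyAdapted ℱ M)
    (hcont : ∀ ω, Continuous (M · ω)) (h0 : ∀ s ω, 0 ≤ M s ω) {a b : ℝ≥0} (hab : a ≤ b) :
    StronglyMeasurable[ℱ b] fun ω => ⨆ s ∈ Icc a b, M s ω := by
  refine Measurable.stronglyMeasurable (measurable_of_Ioi fun x => ?_)
  have h : (fun ω => ⨆ s ∈ Icc a b, M s ω) ⁻¹' Ioi x = {ω | ∃ s ∈ Icc a b, x < M s ω} :=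
    ext fun ω => lt_biSup_Icc_iff (hcont ω) (h0 · ω) hab
  exact h ▸ measurableSet_exists_mem_Icc_lt hadp hcont measurable_const hab

lemma isStoppingTime_dyadicHitTime (hadp : StronglyAdapted ℱ M)
    (hcont : ∀ ω, Continuous (M · ω)) {t : ℝ≥0} (hξ : Measurable[ℱ t] ξ) (k m : ℕ) :
    IsStoppingTime ℱ fun ω => (dyadicHitTime (M · ω) (ξ ω) t k m : WithTop ℝ≥0) := by
  intro u
  have h : {ω | (dyadicHitTime (M · ω) (ξ ω) t k m : WithTop ℝ≥0) ≤ u} = ⋃ j : ℕ,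
      {ω | t + j / 2 ^ m ≤ u ∧ (k * 2 ^ m ≤ j ∨ ∃ s ∈ Icc t (t + j / 2 ^ m), ξ ω < M s ω)} := by
    ext ω
    simp only [WithTop.coe_le_coe, mem_ofPred_eq, mem_iUnion]
    refine ⟨fun hu => ⟨_, hu, dyadicHitIndex_spec⟩, fun ⟨j, hju, hj⟩ => le_trans ?_ hju⟩
    unfold dyadicHitTime
    gcongr
    exact Nat.sInf_le hj
  rw [h]
  refine .iUnion fun j => ?_
  by_cases hju : t + j / 2 ^ m ≤ u
  · simp only [hju, true_and, ofPred_or]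
    exact (MeasurableSet.const _).union <| ℱ.mono hju _ <| measurableSet_exists_mem_Icc_lt hadp
      hcont (hξ.mono (ℱ.mono le_self_add) le_rfl) le_self_add
  · simp [hju]

lemma countable_range_dyadicHitTime (t : ℝ≥0) (k m : ℕ) :
    (range fun ω => (dyadicHitTime (M · ω) (ξ ω) t k m : WithTop ℝ≥0)).Countable :=
  (countable_range fun j : ℕ => ((t + j / 2 ^ m : ℝ≥0) : WithTop ℝ≥0)).mono <| by
    rintro _ ⟨ω, rfl⟩
    exact ⟨_, rfl⟩

lemma measurable_stoppedAtLevel (hadp : StronglyAdapted ℱ M) (hcont : ∀ ω, Continuous (M · ω))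
    {t T : ℝ≥0} (hξ : Measurable[ℱ t] ξ) (hT : t ≤ T) :
    Measurable fun ω => stoppedAtLevel (M · ω) (ξ ω) t T :=
  (hξ.mono (ℱ.le t) le_rfl).ite
    (ℱ.le T _ (measurableSet_exists_mem_Icc_lt hadp hcont (hξ.mono (ℱ.mono hT) le_rfl) hT))
    ((hadp T).measurable.mono (ℱ.le T) le_rfl)

end Measurability

namespace MeasureTheory.Martingale

variable {Ω ι : Type*} {m0 : MeasurableSpace Ω} {μ : Measure Ω} [IsFiniteMeasure μ]
  [LinearOrder ι] [TopologicalSpace ι] [OrderTopology ι] [FirstCountableTopology ι] [Nonempty ι]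
  {ℱ : Filtration ι m0} {f : ι → Ω → ℝ}

lemma setIntegral_stoppedValue_eq (hf : Martingale f ℱ μ) {τ : Ω → WithTop ι}
    (hτ : IsStoppingTime ℱ τ) {i n : ι} (hin : i ≤ n) (hiτ : ∀ ω, i ≤ τ ω)
    (hτn : ∀ ω, τ ω ≤ n) (hτc : (range τ).Countable) {B : Set Ω}
    (hB : MeasurableSet[ℱ i] B) :
    ∫ ω in B, stoppedValue f τ ω ∂μ = ∫ ω in B, f i ω ∂μ := by
  have hℱτ : ℱ i ≤ hτ.measurableSpace := by
    rw [← IsStoppingTime.measurableSpace_const ℱ i]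
    exact (isStoppingTime_const ℱ i).measurableSpace_mono hτ hiτ
  calc ∫ ω in B, stoppedValue f τ ω ∂μ = ∫ ω in B, μ[f n | hτ.measurableSpace] ω ∂μ :=
        integral_congr_ae <| ae_restrict_of_ae <|
          hf.stoppedValue_ae_eq_condExp_of_le_const_of_countable_range hτ hτn hτc
    _ = ∫ ω in B, f n ω ∂μ :=
        setIntegral_condExp (hτ.measurableSpace_le_of_le hτn) (hf.integrable n) (hℱτ _ hB)
    _ = ∫ ω in B, μ[f n | ℱ i] ω ∂μ := (setIntegral_condExp (ℱ.le i) (hf.integrable n) hB).symm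
    _ = ∫ ω in B, f i ω ∂μ := integral_congr_ae <| ae_restrict_of_ae <| hf.condExp_ae_eq hin

lemma uniformIntegrable_stoppedValue {κ : Type*} (hf : Martingale f ℱ μ)
    {τ : κ → Ω → WithTop ι} (hτ : ∀ j, IsStoppingTime ℱ (τ j)) {n : ι}
    (hτn : ∀ j ω, τ j ω ≤ n) (hτc : ∀ j, (range (τ j)).Countable) :
    UniformIntegrable (fun j => stoppedValue f (τ j)) 1 μ :=
  ((hf.integrable n).uniformIntegrable_condExp fun j =>
    (hτ j).measurableSpace_le_of_le (hτn j)).ae_eq fun j =>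
      (hf.stoppedValue_ae_eq_condExp_of_le_const_of_countable_range (hτ j) (hτn j) (hτc j)).symm

end MeasureTheory.Martingale

lemma tendsto_setIntegral_of_uniformIntegrable {α : Type*} {m0 : MeasurableSpace α}
    {μ : Measure α} [IsFiniteMeasure μ] {F : ℕ → α → ℝ} {g : α → ℝ}
    (hF : UniformIntegrable F 1 μ) (hg : Integrable g μ)
    (hlim : ∀ᵐ x ∂μ, Tendsto (F · x) atTop (𝓝 (g x))) (s : Set α) :
    Tendsto (fun n => ∫ x in s, F n x ∂μ) atTop (𝓝 (∫ x in s, g x ∂μ)) :=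
  tendsto_setIntegral_of_L1' g hg.1 (.of_forall fun n => memLp_one_iff_integrable.1 (hF.memLp n))
    (tendsto_Lp_finite_of_tendsto_ae le_rfl ENNReal.one_ne_top (fun n => (hF.memLp n).1)
      (memLp_one_iff_integrable.2 hg) hF.2.1 hlim) s

lemma condExp_congr_ae_restrict {α : Type*} {m m0 : MeasurableSpace α} {μ : Measure α}
    {f g : α → ℝ} {s : Set α} (hs : MeasurableSet[m] s) (hf : Integrable f μ)
    (hg : Integrable g μ) (hfg : f =ᵐ[μ.restrict s] g) :
    μ[f | m] =ᵐ[μ.restrict s] μ[g | m] := by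
  have hzero : μ[f - g | m] =ᵐ[μ.restrict s] 0 :=
    condExp_ae_eq_restrict_zero hs (hfg.mono fun x hx => sub_eq_zero.2 hx)
  filter_upwards [hzero, ae_restrict_of_ae (condExp_sub hf hg m)] with x h0 hsub
  rw [hsub, Pi.sub_apply, Pi.zero_apply, sub_eq_zero] at h0
  exact h0

section Hitting

variable {Ω : Type*} {m0 : MeasurableSpace Ω} {P : Measure Ω} [IsFiniteMeasure P]
  {ℱ : Filtration ℝ≥0 m0} {M : ℝ≥0 → Ω → ℝ} {ξ : Ω → ℝ} {t : ℝ≥0}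

lemma setIntegral_stoppedAtLevel (hM : Martingale M ℱ P) (hcont : ∀ ω, Continuous (M · ω))
    (hξ : Measurable[ℱ t] ξ) (hξint : Integrable ξ P) (hMξ : ∀ ω, M t ω ≤ ξ ω) (k : ℕ)
    {B : Set Ω} (hB : MeasurableSet[ℱ t] B) :
    ∫ ω in B, stoppedAtLevel (M · ω) (ξ ω) t (t + k) ∂P = ∫ ω in B, M t ω ∂P := by
  set τ : ℕ → Ω → WithTop ℝ≥0 := fun m ω => dyadicHitTime (M · ω) (ξ ω) t k m
  have hτ : ∀ m, IsStoppingTime ℱ (τ m) :=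
    isStoppingTime_dyadicHitTime hM.stronglyAdapted hcont hξ k
  have hτT : ∀ m ω, τ m ω ≤ (t + k : ℝ≥0) := fun m ω => WithTop.coe_le_coe.2 dyadicHitTime_le
  have hτc : ∀ m, (range (τ m)).Countable := countable_range_dyadicHitTime t k
  have hVint : Integrable (fun ω => stoppedAtLevel (M · ω) (ξ ω) t (t + k)) P := by
    refine (hξint.norm.add (hM.integrable (t + k)).norm).mono'
      (measurable_stoppedAtLevel hM.stronglyAdapted hcont hξ le_self_add).aestronglyMeasurable
      (.of_forall fun ω => ?_)
    unfold stoppedAtLevel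
    split_ifs
    · exact le_add_of_nonneg_right (norm_nonneg _)
    · exact le_add_of_nonneg_left (norm_nonneg _)
  have hlim := tendsto_setIntegral_of_uniformIntegrable
    (hM.uniformIntegrable_stoppedValue hτ hτT hτc) hVint
    (.of_forall fun ω => tendsto_apply_dyadicHitTime (hcont ω) (hMξ ω)) B
  have hconst : ∀ m, ∫ ω in B, stoppedValue M (τ m) ω ∂P = ∫ ω in B, M t ω ∂P := fun m =>
    hM.setIntegral_stoppedValue_eq (hτ m) le_self_add
      (fun ω => WithTop.coe_le_coe.2 le_dyadicHitTime) (hτT m) (hτc m) hB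
  simp_rw [hconst] at hlim
  exact tendsto_nhds_unique hlim tendsto_const_nhds

lemma setIntegral_indicator_exists_le_lt (hM : Martingale M ℱ P)
    (hcont : ∀ ω, Continuous (M · ω)) (h0 : ∀ s ω, 0 ≤ M s ω)
    (hlim : ∀ᵐ ω ∂P, Tendsto (M · ω) atTop (𝓝 0)) (hξ : Measurable[ℱ t] ξ)
    (hξint : Integrable ξ P) (hMξ : ∀ ω, M t ω ≤ ξ ω) {B : Set Ω} (hB : MeasurableSet[ℱ t] B) :
    ∫ ω in B, {ω | ∃ s, t ≤ s ∧ ξ ω < M s ω}.indicator ξ ω ∂P = ∫ ω in B, M t ω ∂P := by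
  classical
  have hVlim : ∀ᵐ ω ∂P, Tendsto (fun k : ℕ => stoppedAtLevel (M · ω) (ξ ω) t (t + k)) atTop
      (𝓝 ({ω | ∃ s, t ≤ s ∧ ξ ω < M s ω}.indicator ξ ω)) := by
    filter_upwards [hlim] with ω hω
    simpa only [indicator_apply, mem_ofPred_eq] using tendsto_stoppedAtLevel_atTop hω
  have hlimV := tendsto_integral_of_dominated_convergence (μ := P.restrict B) ξ
    (fun k => (measurable_stoppedAtLevel hM.stronglyAdapted hcont hξ le_self_add
      (T := t + k)).aestronglyMeasurable.restrict) hξint.restrict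
    (fun k => .of_forall fun ω => by
      rw [Real.norm_eq_abs, abs_of_nonneg (stoppedAtLevel_nonneg (h0 · ω) ((h0 t ω).trans (hMξ ω)))]
      exact stoppedAtLevel_le le_self_add)
    (ae_restrict_of_ae hVlim)
  simp_rw [setIntegral_stoppedAtLevel hM hcont hξ hξint hMξ _ hB] at hlimV
  exact tendsto_nhds_unique hlimV tendsto_const_nhds

lemma condExp_indicator_exists_le_lt_of_integrable (hM : Martingale M ℱ P)
    (hcont : ∀ ω, Continuous (M · ω)) (h0 : ∀ s ω, 0 ≤ M s ω)
    (hlim : ∀ᵐ ω ∂P, Tendsto (M · ω) atTop (𝓝 0)) (hξ : StronglyMeasurable[ℱ t] ξ)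
    (hξint : Integrable ξ P) (hMξ : ∀ ω, M t ω ≤ ξ ω) (hξpos : ∀ᵐ ω ∂P, 0 < ξ ω) :
    P[{ω | ∃ s, t ≤ s ∧ ξ ω < M s ω}.indicator (fun _ => (1 : ℝ)) | ℱ t]
      =ᵐ[P] fun ω => M t ω / ξ ω := by
  set H := {ω | ∃ s, t ≤ s ∧ ξ ω < M s ω}
  have hH : MeasurableSet H := measurableSet_exists_le_lt hM.stronglyAdapted hcont hξ.measurable
  have hξH : H.indicator ξ = ξ * H.indicator fun _ => 1 := by
    ext ω
    by_cases hω : ω ∈ H <;> simp [hω]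
  have hcond : P[H.indicator ξ | ℱ t] =ᵐ[P] M t :=
    (ae_eq_condExp_of_forall_setIntegral_eq (ℱ.le t) (hξint.indicator hH)
      (fun _ _ _ => (hM.integrable t).integrableOn)
      (fun B hB _ => (setIntegral_indicator_exists_le_lt hM hcont h0 hlim hξ.measurable hξint
        hMξ hB).symm) (hM.stronglyAdapted t).aestronglyMeasurable).symm
  have hpull : P[H.indicator ξ | ℱ t] =ᵐ[P] ξ * P[H.indicator (fun _ => 1) | ℱ t] :=
    hξH ▸ condExp_mul_of_stronglyMeasurable_left hξ (hξH ▸ hξint.indicator hH)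
      ((integrable_const 1).indicator hH)
  filter_upwards [hcond, hpull, hξpos] with ω hcond hpull hpos
  rw [eq_div_iff hpos.ne', mul_comm, ← hcond, hpull, Pi.mul_apply]

/-- Localising on `{ξ ≤ c}` replaces `ξ` by the integrable `min ξ (c + M t)`. -/
lemma condExp_indicator_exists_le_lt (hM : Martingale M ℱ P)
    (hcont : ∀ ω, Continuous (M · ω)) (h0 : ∀ s ω, 0 ≤ M s ω)
    (hlim : ∀ᵐ ω ∂P, Tendsto (M · ω) atTop (𝓝 0)) (hξ : StronglyMeasurable[ℱ t] ξ)
    (hMξ : ∀ ω, M t ω ≤ ξ ω) (hξpos : ∀ᵐ ω ∂P, 0 < ξ ω) :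
    P[{ω | ∃ s, t ≤ s ∧ ξ ω < M s ω}.indicator (fun _ => (1 : ℝ)) | ℱ t]
      =ᵐ[P] fun ω => M t ω / ξ ω := by
  have hind : ∀ ζ : Ω → ℝ, Measurable[ℱ t] ζ →
      Integrable ({ω | ∃ s, t ≤ s ∧ ζ ω < M s ω}.indicator fun _ => (1 : ℝ)) P := fun ζ hζ =>
    (integrable_const 1).indicator (measurableSet_exists_le_lt hM.stronglyAdapted hcont hζ)
  have hMt : Measurable[ℱ t] (M t) := (hM.stronglyAdapted t).measurable
  have hloc : ∀ n : ℕ, P[{ω | ∃ s, t ≤ s ∧ ξ ω < M s ω}.indicator (fun _ => (1 : ℝ)) | ℱ t]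
      =ᵐ[P.restrict {ω | ξ ω ≤ n + 1}] fun ω => M t ω / ξ ω := by
    intro n
    set ζ : Ω → ℝ := fun ω => min (ξ ω) (n + 1 + M t ω)
    have hζ : Measurable[ℱ t] ζ := hξ.measurable.min (measurable_const.add hMt)
    have hMζ : ∀ ω, M t ω ≤ ζ ω := fun ω => le_min (hMξ ω) (le_add_of_nonneg_left (by positivity))
    have hζint : Integrable ζ P := by
      refine ((integrable_const ((n : ℝ) + 1)).add (hM.integrable t)).mono'
        (hζ.mono (ℱ.le t) le_rfl).aestronglyMeasurable (.of_forall fun ω => ?_)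
      rw [Real.norm_eq_abs, abs_of_nonneg ((h0 t ω).trans (hMζ ω))]
      exact min_le_right _ _
    have hζpos : ∀ᵐ ω ∂P, 0 < ζ ω := by
      filter_upwards [hξpos] with ω hω
      exact lt_min hω (add_pos_of_pos_of_nonneg n.cast_add_one_pos (h0 t ω))
    have hA : MeasurableSet[ℱ t] {ω | ξ ω ≤ n + 1} := hξ.measurable measurableSet_Iic
    have hζξ : ∀ ω ∈ {ω | ξ ω ≤ n + 1}, ζ ω = ξ ω := fun ω hω =>
      min_eq_left (hω.trans (le_add_of_nonneg_right (h0 t ω)))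
    have hζξ' : ∀ᵐ ω ∂P.restrict {ω | ξ ω ≤ n + 1}, ζ ω = ξ ω :=
      ae_restrict_of_forall_mem (ℱ.le t _ hA) hζξ
    calc P[{ω | ∃ s, t ≤ s ∧ ξ ω < M s ω}.indicator (fun _ => (1 : ℝ)) | ℱ t]
        =ᵐ[P.restrict {ω | ξ ω ≤ n + 1}]
          P[{ω | ∃ s, t ≤ s ∧ ζ ω < M s ω}.indicator (fun _ => (1 : ℝ)) | ℱ t] := by
          refine condExp_congr_ae_restrict hA (hind ξ hξ.measurable) (hind ζ hζ)
            (indicator_ae_eq_of_ae_eq_set ?_)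
          filter_upwards [hζξ'] with ω hω
          show (∃ s, t ≤ s ∧ ξ ω < M s ω) = ∃ s, t ≤ s ∧ ζ ω < M s ω
          rw [hω]
      _ =ᵐ[P.restrict {ω | ξ ω ≤ n + 1}] fun ω => M t ω / ζ ω :=
          ae_restrict_of_ae <| condExp_indicator_exists_le_lt_of_integrable hM hcont h0 hlim
            hζ.stronglyMeasurable hζint hMζ hζpos
      _ =ᵐ[P.restrict {ω | ξ ω ≤ n + 1}] fun ω => M t ω / ξ ω := by
          filter_upwards [hζξ'] with ω hω
          rw [hω]
  have hcover : (⋃ n : ℕ, {ω | ξ ω ≤ n + 1}) = univ :=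
    eq_univ_of_forall fun ω => mem_iUnion.2 ⟨⌈ξ ω⌉₊, show ξ ω ≤ (⌈ξ ω⌉₊ : ℝ) + 1 from
      (Nat.le_ceil _).trans (le_add_of_nonneg_right zero_le_one)⟩
  rw [← ae_eq_restrict_iUnion_iff, hcover, Measure.restrict_univ] at hloc
  exact hloc

end Hitting

/-- Let `M` be a nonnegative continuous martingale with `M 0 = 1` a.s. and
`M t → 0` a.s. as `t → ∞`, and let `ρ := inf {t | M t = M*_∞}` be the (a.s. unique and a.s.
finite) time of the overall maximum of `M`. Then for every `t ≥ 0`, almost surely,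
`P[ρ > t | 𝓕_t] = M t / M*_t`, where `M*_t = sup_{s ∈ [0,t]} M s`. -/
theorem conditional_probability_max_after_t
    {Ω : Type*} {m : MeasurableSpace Ω} {P : Measure Ω} [IsProbabilityMeasure P]
    (ℱ : Filtration ℝ≥0 m) (M : ℝ≥0 → Ω → ℝ)
    (hMmart : Martingale M ℱ P)
    (hMnonneg : ∀ t ω, 0 ≤ M t ω)
    (hMcont : ∀ ω, Continuous fun t => M t ω)
    (hM0 : ∀ᵐ ω ∂P, M 0 ω = 1)
    (hMlim : ∀ᵐ ω ∂P, Tendsto (fun t => M t ω) atTop (nhds (0 : ℝ)))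
    (ρ : Ω → ℝ≥0) (hρ : ∀ ω, ρ ω = sInf {u : ℝ≥0 | M u ω = ⨆ v, M v ω}) :
    ∀ t : ℝ≥0,
      P[Set.indicator {ω | t < ρ ω} (fun _ => (1 : ℝ)) | ℱ t]
        =ᵐ[P] fun ω => M t ω / (⨆ s ∈ Set.Icc 0 t, M s ω) := by
  intro t
  have hsup : StronglyMeasurable[ℱ t] fun ω => ⨆ s ∈ Icc 0 t, M s ω :=
    stronglyMeasurable_biSup_Icc hMmart.stronglyAdapted hMcont hMnonneg zero_le
  have hle : ∀ ω, ∀ s ≤ t, M s ω ≤ ⨆ s ∈ Icc 0 t, M s ω := fun ω s hs =>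
    le_biSup_Icc (hMcont ω) (hMnonneg · ω) ⟨zero_le, hs⟩
  have hpos : ∀ᵐ ω ∂P, 0 < ⨆ s ∈ Icc 0 t, M s ω := by
    filter_upwards [hM0] with ω h1
    exact one_pos.trans_le (h1 ▸ hle ω 0 zero_le)
  have hevent : {ω | t < ρ ω} =ᵐ[P] {ω | ∃ s, t ≤ s ∧ ⨆ r ∈ Icc 0 t, M r ω < M s ω} := by
    filter_upwards [hMlim] with ω hω
    show (t < ρ ω) = ∃ s, t ≤ s ∧ ⨆ r ∈ Icc 0 t, M r ω < M s ω
    rw [hρ ω, eq_iff_iff]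
    exact lt_sInf_setOf_eq_iSup_iff (hMcont ω) (hMnonneg · ω) hω t
  exact (condExp_congr_ae (indicator_ae_eq_of_ae_eq_set hevent)).trans
    (condExp_indicator_exists_le_lt hMmart hMcont hMnonneg hMlim hsup (fun ω => hle ω t le_rfl)
      hpos)
end

section
/- Let (Ω, 𝓕, P) be a probability space with a filtration (𝓕_t)_{t ≥ 0}, and let Z = (Z_t)_{t ≥ 0} be a real-valued adapted process with Z_t > 0 almost surely for every t and Z_0 = 1 almost surely. If both Z and 1/Z are supermartingales with respect to (𝓕_t) and P, then Z_t = 1 almost surely for every t ≥ 0. -/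
open MeasureTheory Filter Set
open scoped NNReal ENNReal

/-!
Since `x + x⁻¹ - 2 = (x - 1)² / x ≥ 0` for `x > 0`, with equality only at `x = 1`, the two
supermartingale inequalities `𝔼[Z t] ≤ 𝔼[Z 0] = 1` and `𝔼[(Z t)⁻¹] ≤ 𝔼[(Z 0)⁻¹] = 1` force the
nonnegative variable `Z t + (Z t)⁻¹ - 2` to have integral `0`, hence to vanish almost surely.
-/

lemma add_inv_sub_two_eq_sq_div {K : Type*} [Field K] {x : K} (hx : x ≠ 0) :
    x + x⁻¹ - 2 = (x - 1) ^ 2 / x := by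
  field_simp
  ring

namespace MeasureTheory

theorem Supermartingale.integral_le {Ω ι E : Type*} {m : MeasurableSpace Ω} {μ : Measure Ω}
    [Preorder ι] [NormedAddCommGroup E] [NormedSpace ℝ E] [CompleteSpace E] [PartialOrder E]
    [IsOrderedAddMonoid E] [IsOrderedModule ℝ E] [ClosedIciTopology E] {ℱ : Filtration ι m}
    [SigmaFiniteFiltration μ ℱ] {f : ι → Ω → E} (hf : Supermartingale f ℱ μ) {i j : ι}
    (hij : i ≤ j) : ∫ ω, f j ω ∂μ ≤ ∫ ω, f i ω ∂μ := by
  simpa only [Measure.restrict_univ] using hf.setIntegral_le hij MeasurableSet.univ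

theorem ae_eq_one_of_integral_le_one_of_integral_inv_le_one {Ω : Type*} {m : MeasurableSpace Ω}
    {μ : Measure Ω} [IsProbabilityMeasure μ] {X : Ω → ℝ} (hpos : ∀ᵐ ω ∂μ, 0 < X ω)
    (hX : Integrable X μ) (hXinv : Integrable (fun ω => (X ω)⁻¹) μ) (hle : ∫ ω, X ω ∂μ ≤ 1)
    (hinv_le : ∫ ω, (X ω)⁻¹ ∂μ ≤ 1) : X =ᵐ[μ] 1 := by
  set g : Ω → ℝ := fun ω => X ω + (X ω)⁻¹ - 2
  have hg_eq : ∀ᵐ ω ∂μ, g ω = (X ω - 1) ^ 2 / X ω := by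
    filter_upwards [hpos] with ω hω using add_inv_sub_two_eq_sq_div hω.ne'
  have hg_nonneg : 0 ≤ᵐ[μ] g := by
    filter_upwards [hg_eq, hpos] with ω hgω hω
    rw [Pi.zero_apply, hgω]
    positivity
  have hsum : Integrable (fun ω => X ω + (X ω)⁻¹) μ := hX.add hXinv
  have hg_int : Integrable g μ := hsum.sub (integrable_const 2)
  have hg_integral : ∫ ω, g ω ∂μ = 0 := by
    refine le_antisymm ?_ (integral_nonneg_of_ae hg_nonneg)
    rw [integral_sub hsum (integrable_const 2), integral_add hX hXinv]
    simp only [integral_const, probReal_univ, one_smul]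
    linarith
  filter_upwards [(integral_eq_zero_iff_of_nonneg_ae hg_nonneg hg_int).mp hg_integral, hg_eq,
    hpos] with ω hg0 hgω hω
  rw [Pi.zero_apply, hgω] at hg0
  simpa [hω.ne', sub_eq_zero] using hg0

end MeasureTheory

/-- Let `Z` be an adapted process with `Z t > 0` a.s. for every `t` and
`Z 0 = 1` a.s. If both `Z` and `1/Z` are supermartingales, then `Z t = 1` a.s. for every
`t ≥ 0`. (This is the Jensen-inequality argument underlying the uniqueness of the
numéraire portfolio.) -/
theorem supermartingale_with_supermartingale_inverse_is_one
    {Ω : Type*} {m : MeasurableSpace Ω} {P : Measure Ω} [IsProbabilityMeasure P]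
    (ℱ : Filtration ℝ≥0 m) (Z : ℝ≥0 → Ω → ℝ)
    (hZpos : ∀ t : ℝ≥0, ∀ᵐ ω ∂P, 0 < Z t ω)
    (hZ0 : ∀ᵐ ω ∂P, Z 0 ω = 1)
    (hZ : Supermartingale Z ℱ P)
    (hZinv : Supermartingale (fun t ω => (Z t ω)⁻¹) ℱ P) :
    ∀ t : ℝ≥0, ∀ᵐ ω ∂P, Z t ω = 1 := by
  intro t
  have hZ0_integral : ∫ ω, Z 0 ω ∂P = 1 := by
    simp [integral_congr_ae hZ0]
  have hZ0_inv_integral : ∫ ω, (Z 0 ω)⁻¹ ∂P = 1 := by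
    have hZ0_inv : ∀ᵐ ω ∂P, (Z 0 ω)⁻¹ = 1 := hZ0.mono fun ω h => by rw [h, inv_one]
    simp [integral_congr_ae hZ0_inv]
  exact ae_eq_one_of_integral_le_one_of_integral_inv_le_one (hZpos t) (hZ.integrable t)
    (hZinv.integrable t) ((hZ.integral_le (zero_le : 0 ≤ t)).trans_eq hZ0_integral)
    ((hZinv.integral_le (zero_le : 0 ≤ t)).trans_eq hZ0_inv_integral)
end
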